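/- For all integers m ≥ 0, n ≥ 0 and for each w ∈ {3, 5, 7}, the generalized overcubic partition function satisfies a̅_{8m+3}(8n + w) ≡ 0 (mod 16). -/

import Mathlib

/-- The infinite product `(q^h; q^h)_∞ = ∏_{k ≥ 0} (1 - q^{h(k+1)})` as a formal power
series over `R`.  Since the factor `1 - q^{h(k+1)}` only affects coefficients of
degree `≥ k + 1`, the coefficient of `qⁿ` is that of the finite truncated product
over `k < n + 1`. -/
noncomputable def qPochInf (R : Type*) [CommRing R] (h : ℕ) : PowerSeries R :=
  PowerSeries.mk fun n =>
    PowerSeries.coeff (R := R) n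
      (∏ k ∈ Finset.range (n + 1), (1 - PowerSeries.X ^ (h * (k + 1))))

/-- `abar` is the generalized overcubic partition family: for every `c ≥ 1`,
`∑_{n≥0} a̅_c(n) qⁿ = f₄^(c-1) / (f₁² f₂^(2c-3))`, stated multiplied out (both sides
multiplied by `f₁² f₂^(2c-3) · f₂³ = f₁² f₂^(2c) / f₂³`, i.e. as
`(∑ a̅_c(n) qⁿ) · f₁² · f₂^(2c) = f₄^(c-1) · f₂³`) so as to avoid the negative
exponent `2c - 3 = -1` occurring when `c = 1`; this is equivalent since the `fₕ`
are units in the ring of formal power series. -/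
def IsGenOvercubic (abar : ℕ → ℕ → ℕ) : Prop :=
  ∀ c : ℕ, 1 ≤ c →
    (PowerSeries.mk fun n => (abar c n : ℤ)) * qPochInf ℤ 1 ^ 2 * qPochInf ℤ 2 ^ (2 * c) =
      qPochInf ℤ 4 ^ (c - 1) * qPochInf ℤ 2 ^ 3

/-!
Multiplying out the generating function and using Gauss's product formula
`θ(q) = ∑_{k ∈ ℤ} q^{k²} = f₂⁵ / (f₁² f₄²)` gives, for `c = 8m + 3`,
`∑ a̅_c(n) qⁿ = θ(q) · (f₄⁴ / f₂⁸)^{2m+1}`. The product formula is the case `x = 1` of the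
finite Jacobi triple product
`∏_{j<n} (1 + x q^{2j+1})(x + q^{2j+1}) = ∑_m [2n, m]_{q²} q^{(n-m)²} xᵐ`,
multiplied by `(q²; q²)ₙ` and read modulo `q^{n+1}`.

Since `(1 - y)⁸ ≡ (1 - y²)⁴ (mod 8)`, `f₂⁸ ≡ f₄⁴ (mod 8)`, so `f₄⁴ / f₂⁸ = 1 - 8v` with `v`
a series in `q²`. Hence the generating function is `θ - 8 θ E` with `E` even, and at an odd
exponent `e` the term `θ E = E + (θ - 1) E` has even coefficient because
`θ - 1 = 2 ∑_{k ≥ 1} q^{k²}`. So `a̅_c(e) ≡ [qᵉ] θ = 0 (mod 16)` when `e ≡ 3, 5, 7 (mod 8)`,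
which is never a square.
-/

open PowerSeries Finset

section QBinomial

variable {R : Type*} [CommRing R] (q : R)

def qFact (n : ℕ) : R := ∏ i ∈ range n, (1 - q ^ (i + 1))

def qBinom : ℕ → ℕ → R
  | _, 0 => 1
  | 0, _ + 1 => 0
  | n + 1, k + 1 => qBinom n (k + 1) + q ^ (n - k) * qBinom n k

@[simp] lemma qFact_zero : qFact q 0 = 1 := prod_range_zero _

lemma qFact_succ (n : ℕ) : qFact q (n + 1) = qFact q n * (1 - q ^ (n + 1)) :=
  prod_range_succ _ _

lemma qFact_add (a b : ℕ) :
    qFact q (a + b) = qFact q a * ∏ i ∈ range b, (1 - q ^ (a + i + 1)) :=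
  prod_range_add _ _ _

@[simp] lemma qBinom_zero_right (n : ℕ) : qBinom q n 0 = 1 := by cases n <;> rfl

lemma qBinom_succ_succ (n k : ℕ) :
    qBinom q (n + 1) (k + 1) = qBinom q n (k + 1) + q ^ (n - k) * qBinom q n k := rfl

lemma qBinom_eq_zero_of_lt : ∀ {n k : ℕ}, n < k → qBinom q n k = 0
  | 0, _ + 1, _ => rfl
  | n + 1, k + 1, h => by
    rw [qBinom_succ_succ, qBinom_eq_zero_of_lt (by omega), qBinom_eq_zero_of_lt (by omega),
      mul_zero, add_zero]

@[simp] lemma qBinom_self : ∀ n : ℕ, qBinom q n n = 1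
  | 0 => rfl
  | n + 1 => by rw [qBinom_succ_succ, qBinom_eq_zero_of_lt q n.lt_succ_self, qBinom_self n]; simp

lemma qFact_mul_qFact_mul_qBinom {n k : ℕ} (hk : k ≤ n) :
    qFact q k * qFact q (n - k) * qBinom q n k = qFact q n := by
  induction n generalizing k with
  | zero =>
    obtain rfl : k = 0 := by omega
    simp
  | succ n ih =>
    rcases k with _ | k
    · simp
    rcases (Nat.succ_le_succ_iff.mp hk).lt_or_eq with hk | rfl
    · have h₁ := ih (k := k + 1) (by omega)
      have h₂ := ih (k := k) (by omega)
      obtain ⟨d, hd⟩ : ∃ d, n - k = d + 1 := ⟨n - k - 1, by omega⟩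
      rw [show n - (k + 1) = d by omega] at h₁
      rw [hd] at h₂
      rw [show n + 1 - (k + 1) = d + 1 by omega, qBinom_succ_succ, hd]
      simp only [qFact_succ] at h₁ h₂ ⊢
      have hpow : q ^ (d + 1) * q ^ (k + 1) = q ^ (n + 1) := by rw [← pow_add]; congr 1; omega
      linear_combination (1 - q ^ (d + 1)) * h₁ + q ^ (d + 1) * (1 - q ^ (k + 1)) * h₂ -
        qFact q n * hpow
    · simp

lemma qFact_two_mul (n : ℕ) :
    qFact q (2 * n) = (∏ k ∈ range n, (1 - q ^ (2 * k + 1))) * qFact (q ^ 2) n := by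
  induction n with
  | zero => simp
  | succ n ih =>
    rw [show 2 * (n + 1) = 2 * n + 1 + 1 by ring, qFact_succ, qFact_succ, ih, prod_range_succ,
      qFact_succ]
    ring

lemma map_qFact {R S : Type*} [CommRing R] [CommRing S] (f : R →+* S) (q : R) (n : ℕ) :
    f (qFact q n) = qFact (f q) n := by
  simp [qFact, map_prod]

lemma prod_one_sub_pow_sModEq_one (c k : ℕ) :
    ∏ i ∈ range k, (1 - q ^ (c + i + 1)) ≡ 1 [SMOD Ideal.span {q ^ (c + 1)}] := by
  have hfactor : ∀ i ∈ range k, 1 - q ^ (c + i + 1) ≡ 1 [SMOD Ideal.span {q ^ (c + 1)}] := by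
    intro i _
    rw [SModEq.sub_mem, Ideal.mem_span_singleton, sub_sub_cancel_left, dvd_neg]
    exact pow_dvd_pow q (by omega)
  simpa using SModEq.prod hfactor

lemma qFact_sModEq_qFact {a b : ℕ} (hab : a ≤ b) :
    qFact q b ≡ qFact q a [SMOD Ideal.span {q ^ (a + 1)}] := by
  obtain ⟨d, rfl⟩ := Nat.exists_eq_add_of_le hab
  simpa [qFact_add] using (SModEq.refl (qFact q a)).mul (prod_one_sub_pow_sModEq_one q a d)

section Domain

variable [IsDomain R] {q}

lemma qFact_ne_zero (hq : ∀ i, q ^ (i + 1) ≠ 1) (n : ℕ) : qFact q n ≠ 0 :=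
  prod_ne_zero_iff.mpr fun i _ => sub_ne_zero.mpr (hq i).symm

lemma qFact_mul_qBinom (hq : ∀ i, q ^ (i + 1) ≠ 1) {n k : ℕ} (hk : k ≤ n) :
    qFact q k * qBinom q n k = ∏ i ∈ range k, (1 - q ^ (n - k + i + 1)) := by
  refine mul_left_cancel₀ (qFact_ne_zero hq (n - k)) ?_
  rw [← mul_assoc, mul_comm (qFact q (n - k)), qFact_mul_qFact_mul_qBinom q hk, ← qFact_add,
    Nat.sub_add_cancel hk]

lemma qBinom_succ_succ' (hq : ∀ i, q ^ (i + 1) ≠ 1) (n k : ℕ) :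
    qBinom q (n + 1) (k + 1) = q ^ (k + 1) * qBinom q n (k + 1) + qBinom q n k := by
  rcases lt_trichotomy k n with hk | rfl | hk
  · refine mul_left_cancel₀ (mul_ne_zero (qFact_ne_zero hq (k + 1))
      (qFact_ne_zero hq (n - k))) ?_
    have h₁ := qFact_mul_qFact_mul_qBinom q (show k + 1 ≤ n by omega)
    have h₂ := qFact_mul_qFact_mul_qBinom q hk.le
    have h₃ := qFact_mul_qFact_mul_qBinom q (show k + 1 ≤ n + 1 by omega)
    obtain ⟨d, hd⟩ : ∃ d, n - k = d + 1 := ⟨n - k - 1, by omega⟩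
    rw [show n - (k + 1) = d by omega] at h₁
    rw [show n + 1 - (k + 1) = d + 1 by omega] at h₃
    rw [hd] at h₂ ⊢
    simp only [qFact_succ] at h₁ h₂ h₃ ⊢
    have hpow : q ^ (k + 1) * q ^ (d + 1) = q ^ (n + 1) := by rw [← pow_add]; congr 1; omega
    linear_combination h₃ - q ^ (k + 1) * (1 - q ^ (d + 1)) * h₁ - (1 - q ^ (k + 1)) * h₂ +
      qFact q n * hpow
  · simp [qBinom_eq_zero_of_lt q k.lt_succ_self]
  · rw [qBinom_eq_zero_of_lt q (by omega : n + 1 < k + 1),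
      qBinom_eq_zero_of_lt q (by omega : n < k + 1), qBinom_eq_zero_of_lt q hk, mul_zero, add_zero]

lemma qBinom_add_two_one (hq : ∀ i, q ^ (i + 1) ≠ 1) (n : ℕ) :
    qBinom q (n + 2) 1 = q * qBinom q n 1 + (1 + q ^ (n + 1)) := by
  rw [qBinom_succ_succ' hq, qBinom_succ_succ, qBinom_zero_right, qBinom_zero_right, Nat.sub_zero]
  ring

lemma qBinom_add_two_add_two (hq : ∀ i, q ^ (i + 1) ≠ 1) (n k : ℕ) :
    qBinom q (n + 2) (k + 2) = q ^ (k + 2) * qBinom q n (k + 2) +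
      (1 + q ^ (n + 1)) * qBinom q n (k + 1) + q ^ (n - k) * qBinom q n k := by
  rw [qBinom_succ_succ' hq, qBinom_succ_succ, qBinom_succ_succ]
  rcases Nat.lt_or_ge k n with hk | hk
  · have hpow : q ^ (k + 2) * q ^ (n - (k + 1)) = q ^ (n + 1) := by
      rw [← pow_add]; congr 1; omega
    linear_combination qBinom q n (k + 1) * hpow
  · rw [qBinom_eq_zero_of_lt q (by omega : n < k + 1),
      qBinom_eq_zero_of_lt q (by omega : n < k + 2)]
    ring

lemma qFact_mul_qBinom_sModEq_one (hq : ∀ i, q ^ (i + 1) ≠ 1) {a c n k : ℕ} (hca : c ≤ a)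
    (hck : c ≤ k) (hkn : c + k ≤ n) :
    qFact q a * qBinom q n k ≡ 1 [SMOD Ideal.span {q ^ (c + 1)}] := by
  have hfact : qFact q a ≡ qFact q k [SMOD Ideal.span {q ^ (c + 1)}] :=
    (qFact_sModEq_qFact q hca).trans (qFact_sModEq_qFact q hck).symm
  refine (hfact.mul SModEq.rfl).trans ?_
  rw [qFact_mul_qBinom hq (by omega)]
  refine (prod_one_sub_pow_sModEq_one q (n - k) k).mono ?_
  exact Ideal.span_singleton_le_span_singleton.mpr (pow_dvd_pow q (by omega))

end Domain

end QBinomial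

section Truncation

variable {R : Type*} [CommRing R]

lemma coeff_eq_of_sModEq {A B : R⟦X⟧} {n k : ℕ} (h : A ≡ B [SMOD Ideal.span {X ^ (n + 1)}])
    (hk : k ≤ n) : coeff k A = coeff k B := by
  rw [SModEq.sub_mem, Ideal.mem_span_singleton, X_pow_dvd_iff] at h
  simpa [sub_eq_zero] using h k (by omega)

lemma eq_of_forall_sModEq {A B : R⟦X⟧} (h : ∀ n, A ≡ B [SMOD Ideal.span {X ^ (n + 1)}]) :
    A = B :=
  ext fun n => coeff_eq_of_sModEq (h n) le_rfl

lemma X_pow_pow_succ_ne_one [Nontrivial R] {h : ℕ} (hh : 0 < h) (i : ℕ) :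
    ((X : R⟦X⟧) ^ h) ^ (i + 1) ≠ 1 := by
  intro H
  simpa [← pow_mul, hh.ne'] using congrArg constantCoeff H

lemma qFact_X_pow_sModEq {h n L : ℕ} (hh : 0 < h) (hnL : n ≤ L) :
    qFact ((X : R⟦X⟧) ^ h) L ≡ qFact (X ^ h) n [SMOD Ideal.span {X ^ (n + 1)}] := by
  refine (qFact_sModEq_qFact _ hnL).mono (Ideal.span_singleton_le_span_singleton.mpr ?_)
  rw [← pow_mul]
  exact pow_dvd_pow X (by nlinarith)

lemma coeff_qPochInf (h n : ℕ) : coeff n (qPochInf R h) = coeff n (qFact (X ^ h) (n + 1)) := by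
  simp [qPochInf, qFact, pow_mul]

lemma qPochInf_sModEq_qFact {h n L : ℕ} (hh : 0 < h) (hnL : n ≤ L) :
    qPochInf R h ≡ qFact (X ^ h) L [SMOD Ideal.span {X ^ (n + 1)}] := by
  rw [SModEq.sub_mem, Ideal.mem_span_singleton, X_pow_dvd_iff]
  intro k hk
  rw [map_sub, sub_eq_zero, coeff_qPochInf]
  exact coeff_eq_of_sModEq ((qFact_X_pow_sModEq hh k.le_succ).trans
    (qFact_X_pow_sModEq hh (by omega)).symm) le_rfl

lemma map_qPochInf {S : Type*} [CommRing S] (f : R →+* S) (h : ℕ) :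
    map f (qPochInf R h) = qPochInf S h := by
  ext n
  rw [coeff_map, coeff_qPochInf, coeff_qPochInf, ← coeff_map, map_qFact]
  simp

lemma isUnit_qPochInf {h : ℕ} (hh : 0 < h) : IsUnit (qPochInf R h) := by
  rw [isUnit_iff_constantCoeff, ← coeff_zero_eq_constantCoeff_apply, coeff_qPochInf]
  simp [qFact, ← pow_mul, hh.ne']

end Truncation

lemma one_sub_pow_two_pow_succ {S : Type*} [CommRing S] {k : ℕ} (hS : (2 : S) ^ (k + 1) = 0)
    (y : S) : (1 - y) ^ 2 ^ (k + 1) = (1 - y ^ 2) ^ 2 ^ k := by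
  have h2 : ((2 : ℕ) : S) ∣ (1 - y) ^ 2 - (1 - y ^ 2) := ⟨y ^ 2 - y, by push_cast; ring⟩
  have := dvd_sub_pow_of_dvd_sub h2 k
  rwa [Nat.cast_ofNat, hS, zero_dvd_iff, sub_eq_zero, ← pow_mul, ← pow_succ'] at this

lemma qFact_pow_two_pow_succ {S : Type*} [CommRing S] {k : ℕ} (hS : (2 : S) ^ (k + 1) = 0)
    (q : S) (n : ℕ) : qFact q n ^ 2 ^ (k + 1) = qFact (q ^ 2) n ^ 2 ^ k := by
  simp only [qFact, ← prod_pow, one_sub_pow_two_pow_succ hS, ← pow_mul, mul_comm]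

lemma qPochInf_pow_two_pow_succ {S : Type*} [CommRing S] {k h : ℕ} (hS : (2 : S) ^ (k + 1) = 0)
    (hh : 0 < h) : qPochInf S h ^ 2 ^ (k + 1) = qPochInf S (2 * h) ^ 2 ^ k := by
  have hS' : (2 : S⟦X⟧) ^ (k + 1) = 0 := by rw [← map_ofNat C, ← map_pow, hS, map_zero]
  refine eq_of_forall_sModEq fun n => ?_
  have h₁ := (qPochInf_sModEq_qFact (R := S) hh (le_refl n)).pow (2 ^ (k + 1))
  have h₂ := qPochInf_sModEq_qFact (R := S) (Nat.mul_pos two_pos hh) (le_refl n)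
  rw [qFact_pow_two_pow_succ hS'] at h₁
  rw [show (X : S⟦X⟧) ^ (2 * h) = (X ^ h) ^ 2 by ring] at h₂
  exact h₁.trans (h₂.pow _).symm

lemma natCast_dvd_of_map_eq_zero {F : ℤ⟦X⟧} {N : ℕ}
    (h : map (Int.castRingHom (ZMod N)) F = 0) : (N : ℤ⟦X⟧) ∣ F := by
  refine ⟨mk fun n => coeff n F / N, ext fun n => ?_⟩
  have hN : (N : ℤ) ∣ coeff n F :=
    (ZMod.intCast_zmod_eq_zero_iff_dvd _ _).mp (by simpa using congrArg (coeff n) h)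
  rw [← map_natCast C, coeff_C_mul, coeff_mk, Int.mul_ediv_cancel' hN]

lemma eight_dvd_qPochInf_pow_sub {h : ℕ} (hh : 0 < h) :
    (8 : ℤ⟦X⟧) ∣ qPochInf ℤ h ^ 8 - qPochInf ℤ (2 * h) ^ 4 := by
  have hZ : map (Int.castRingHom (ZMod 8)) (qPochInf ℤ h ^ 8 - qPochInf ℤ (2 * h) ^ 4) = 0 := by
    rw [map_sub, map_pow, map_pow, map_qPochInf, map_qPochInf, sub_eq_zero]
    exact qPochInf_pow_two_pow_succ (k := 2) (by decide) hh
  exact_mod_cast natCast_dvd_of_map_eq_zero hZ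

section Even

variable {R : Type*} [CommRing R]

/-- Power series in `X²`, recognised as the fixed points of `X ↦ -X`. -/
noncomputable def evenSeries (R : Type*) [CommRing R] : Subring R⟦X⟧ :=
  (rescale (-1 : R)).eqLocus (RingHom.id _)

lemma mem_evenSeries {f : R⟦X⟧} : f ∈ evenSeries R ↔ rescale (-1) f = f := Iff.rfl

lemma coeff_eq_zero_of_mem_evenSeries [NoZeroDivisors R] [CharZero R] {f : R⟦X⟧}
    (hf : f ∈ evenSeries R) {n : ℕ} (hn : Odd n) : coeff n f = 0 := by
  have := congrArg (coeff n) (mem_evenSeries.mp hf)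
  rwa [coeff_rescale, hn.neg_one_pow, neg_one_mul, CharZero.neg_eq_self_iff] at this

lemma mem_evenSeries_of_C_mul_mem [NoZeroDivisors R] {a : R} (ha : a ≠ 0) {f : R⟦X⟧}
    (h : C a * f ∈ evenSeries R) : f ∈ evenSeries R := by
  rw [mem_evenSeries] at h ⊢
  ext n
  have := congrArg (coeff n) h
  rw [coeff_rescale, coeff_C_mul, mul_left_comm] at this
  rw [coeff_rescale]
  exact mul_left_cancel₀ ha this

lemma units_inv_mem_evenSeries (u : R⟦X⟧ˣ) (hu : (u : R⟦X⟧) ∈ evenSeries R) :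
    (↑u⁻¹ : R⟦X⟧) ∈ evenSeries R := by
  rw [mem_evenSeries] at hu ⊢
  refine Units.eq_inv_of_mul_eq_one_left ?_
  rw [← hu, ← map_mul, Units.mul_inv, map_one]

lemma qPochInf_mem_evenSeries (t : ℕ) : qPochInf R (2 * t) ∈ evenSeries R := by
  rw [mem_evenSeries]
  ext n
  rw [coeff_rescale, coeff_qPochInf, ← coeff_rescale, map_qFact, map_pow,
    rescale_X, mul_pow, ← map_pow, pow_mul, neg_one_sq, one_pow, map_one, one_mul]

end Even

lemma sixteen_dvd_coeff_sub_of_mul_pow_eq {F θ g h : ℤ⟦X⟧} {j e : ℕ}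
    (hg : g ∈ evenSeries ℤ) (hh : h ∈ evenSeries ℤ) (hgu : IsUnit g) (hgh : (8 : ℤ⟦X⟧) ∣ g - h)
    (hθ : (2 : ℤ⟦X⟧) ∣ θ - 1) (hF : F * g ^ j = θ * h ^ j) (he : Odd e) :
    16 ∣ coeff e F - coeff e θ := by
  obtain ⟨D, hD⟩ := hgh
  obtain ⟨T, hT⟩ := hθ
  have hDe : D ∈ evenSeries ℤ := mem_evenSeries_of_C_mul_mem (a := 8) (by norm_num)
    (by rw [map_ofNat, ← hD]; exact sub_mem hg hh)
  set v := D * ↑hgu.unit⁻¹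
  have hv : v ∈ evenSeries ℤ := mul_mem hDe (units_inv_mem_evenSeries _ hg)
  have hhv : h * ↑hgu.unit⁻¹ = 1 - 8 * v := by
    linear_combination (-(↑hgu.unit⁻¹ : ℤ⟦X⟧)) * hD + hgu.mul_val_inv
  set E := v * ∑ i ∈ range j, (1 - 8 * v) ^ i
  have hE : E ∈ evenSeries ℤ :=
    mul_mem hv (sum_mem fun i _ => pow_mem (sub_mem (one_mem _) (mul_mem (ofNat_mem _ 8) hv)) i)
  have hFθ : F - θ = -8 * (θ * E) := by
    have hF' : F = θ * (1 - 8 * v) ^ j := by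
      rw [← hhv, mul_pow, ← mul_assoc, ← hF, mul_assoc, ← mul_pow, hgu.mul_val_inv, one_pow,
        mul_one]
    rw [hF']
    linear_combination (-θ) * geom_sum_mul (1 - 8 * v) j
  have hθE : 2 ∣ coeff e (θ * E) := by
    rw [show θ * E = E + C 2 * (T * E) by rw [map_ofNat]; linear_combination E * hT, map_add,
      coeff_C_mul, coeff_eq_zero_of_mem_evenSeries hE he, zero_add]
    exact dvd_mul_right _ _
  obtain ⟨z, hz⟩ := hθE
  refine ⟨-z, ?_⟩
  rw [← map_sub, hFθ, ← map_ofNat C, ← map_neg, coeff_C_mul, hz]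
  ring

section TripleProduct

variable {R : Type*} [CommRing R]

/-- The finite Jacobi triple product, a polynomial in `x` over `R⟦q⟧`. -/
noncomputable def triplePoly (R : Type*) [CommRing R] (n : ℕ) : Polynomial R⟦X⟧ :=
  ∏ j ∈ range n, (1 + Polynomial.C (X ^ (2 * j + 1)) * Polynomial.X) *
    (Polynomial.X + Polynomial.C (X ^ (2 * j + 1)))

lemma triplePoly_succ (n : ℕ) :
    triplePoly R (n + 1) = triplePoly R n * Polynomial.C (X ^ (2 * n + 1)) +
      triplePoly R n * Polynomial.C (1 + (X ^ 2) ^ (2 * n + 1)) * Polynomial.X ^ 1 +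
      triplePoly R n * Polynomial.C (X ^ (2 * n + 1)) * Polynomial.X ^ 2 := by
  rw [triplePoly, prod_range_succ, ← triplePoly]
  simp only [map_add, map_one, map_pow]
  ring

lemma coeff_triplePoly [IsDomain R] (n m : ℕ) :
    (triplePoly R n).coeff m = qBinom (X ^ 2) (2 * n) m * X ^ (((n : ℤ) - m).natAbs ^ 2) := by
  have hq : ∀ i, ((X : R⟦X⟧) ^ 2) ^ (i + 1) ≠ 1 := X_pow_pow_succ_ne_one two_pos
  have hX : ∀ {a b c d : ℕ}, a + b = 2 * c + d → (X : R⟦X⟧) ^ a * X ^ b = (X ^ 2) ^ c * X ^ d :=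
    fun h => by rw [← pow_add, ← pow_mul, ← pow_add, h]
  induction n generalizing m with
  | zero => cases m <;> simp [triplePoly, Polynomial.coeff_one, qBinom]
  | succ n ih =>
    rw [triplePoly_succ, show 2 * (n + 1) = 2 * n + 2 by ring]
    simp only [Polynomial.coeff_add, Polynomial.coeff_mul_C, Polynomial.coeff_mul_X_pow', ih]
    rcases m with _ | _ | k
    · simpa using hX (c := 0) (by zify [sq_abs]; ring)
    · simp only [qBinom_add_two_one hq, zero_add, Nat.cast_one, le_refl, ↓reduceIte, tsub_self,
        qBinom_zero_right, CharP.cast_eq_zero, sub_zero, Int.natAbs_natCast, one_mul,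
        Nat.not_ofNat_le_one, add_zero, Nat.cast_add, add_sub_cancel_right]
      linear_combination qBinom (X ^ 2) (2 * n) 1 *
        hX (a := ((n : ℤ) - 1).natAbs ^ 2) (b := 2 * n + 1) (c := 1) (d := n ^ 2)
          (by zify [sq_abs]; ring)
    · simp only [qBinom_add_two_add_two hq, Nat.cast_add, Nat.cast_one, le_add_iff_nonneg_left,
        zero_le, ↓reduceIte, add_tsub_cancel_right, Nat.reduceSubDiff, add_sub_add_right_eq_sub]
      rcases Nat.lt_or_ge (2 * n) k with hk | hk
      · simp [qBinom_eq_zero_of_lt _ hk, qBinom_eq_zero_of_lt _ (hk.trans k.lt_succ_self),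
          qBinom_eq_zero_of_lt (X ^ 2 : R⟦X⟧) (by omega : 2 * n < k + 2)]
      linear_combination
        qBinom (X ^ 2) (2 * n) (k + 2) * hX (a := ((n : ℤ) - (k + 1 + 1)).natAbs ^ 2)
          (b := 2 * n + 1) (c := k + 2) (d := ((n : ℤ) - (k + 1)).natAbs ^ 2)
          (by zify [sq_abs]; ring) +
        qBinom (X ^ 2) (2 * n) k * hX (a := ((n : ℤ) - k).natAbs ^ 2)
          (b := 2 * n + 1) (c := 2 * n - k) (d := ((n : ℤ) - (k + 1)).natAbs ^ 2)
          (by zify [sq_abs, hk]; ring)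

lemma sq_prod_one_add_X_pow [IsDomain R] (n : ℕ) :
    (∏ j ∈ range n, (1 + (X : R⟦X⟧) ^ (2 * j + 1))) ^ 2 =
      ∑ m ∈ range (2 * n + 1), qBinom (X ^ 2) (2 * n) m * X ^ (((n : ℤ) - m).natAbs ^ 2) := by
  have hdeg : (triplePoly R n).natDegree < 2 * n + 1 := by
    rw [Nat.lt_succ_iff, Polynomial.natDegree_le_iff_coeff_eq_zero]
    intro m hm
    rw [coeff_triplePoly, qBinom_eq_zero_of_lt _ hm, zero_mul]
  have heval := Polynomial.eval_eq_sum_range' hdeg 1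
  simp only [one_pow, mul_one, coeff_triplePoly] at heval
  rw [← heval, triplePoly, Polynomial.eval_prod, sq, ← prod_mul_distrib]
  refine prod_congr rfl fun j _ => ?_
  simp only [Polynomial.eval_mul, Polynomial.eval_add, Polynomial.eval_one, Polynomial.eval_C,
    Polynomial.eval_X]
  ring

noncomputable def squareSeries (R : Type*) [CommRing R] : R⟦X⟧ :=
  mk fun n => if IsSquare n then 1 else 0

/-- Jacobi's `θ(q) = ∑_{k ∈ ℤ} q^{k²}`. -/
noncomputable def thetaSeries (R : Type*) [CommRing R] : R⟦X⟧ := 2 * squareSeries R - 1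

lemma sum_X_pow_sq_sModEq_squareSeries (n : ℕ) :
    ∑ s ∈ range (n + 1), (X : R⟦X⟧) ^ (s ^ 2) ≡ squareSeries R
      [SMOD Ideal.span {X ^ (n + 1)}] := by
  rw [SModEq.sub_mem, Ideal.mem_span_singleton, X_pow_dvd_iff]
  intro N hN
  rw [map_sub, map_sum, squareSeries, coeff_mk, sub_eq_zero]
  simp only [coeff_X_pow]
  split_ifs with hsq
  · obtain ⟨r, rfl⟩ := hsq
    rw [sum_eq_single r]
    · simp [sq]
    · intro s _ hs
      rw [if_neg]
      intro h
      exact hs (Nat.pow_left_injective two_ne_zero (show s ^ 2 = r ^ 2 by rw [← h, sq]))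
    · intro hr
      rw [mem_range] at hr
      nlinarith
  · exact sum_eq_zero fun s _ => if_neg fun h => hsq ⟨s, by rw [h, sq]⟩

lemma sum_X_pow_natAbs_sq (n : ℕ) :
    ∑ m ∈ range (2 * n + 1), (X : R⟦X⟧) ^ (((n : ℤ) - m).natAbs ^ 2) =
      2 * ∑ s ∈ range (n + 1), X ^ (s ^ 2) - 1 := by
  rw [show 2 * n + 1 = n + (n + 1) by ring, sum_range_add, ← sum_range_reflect]
  have hlow : ∀ j ∈ range n, (X : R⟦X⟧) ^ (((n : ℤ) - ↑(n - 1 - j)).natAbs ^ 2) =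
      X ^ ((j + 1) ^ 2) := fun j hj => by
    rw [mem_range] at hj
    congr 2
    omega
  have hhigh : ∀ s ∈ range (n + 1), (X : R⟦X⟧) ^ (((n : ℤ) - ↑(n + s)).natAbs ^ 2) =
      X ^ (s ^ 2) := fun s _ => by
    congr 2
    omega
  rw [sum_congr rfl hlow, sum_congr rfl hhigh, sum_range_succ' (fun s => (X : R⟦X⟧) ^ (s ^ 2))]
  ring

end TripleProduct

section ProductFormula

variable {R : Type*} [CommRing R] [IsDomain R]

lemma qFact_mul_qBinom_mul_X_pow_sModEq {n m : ℕ} (hm : m ≤ 2 * n) :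
    qFact (X ^ 2 : R⟦X⟧) n * (qBinom (X ^ 2) (2 * n) m * X ^ (((n : ℤ) - m).natAbs ^ 2)) ≡
      X ^ (((n : ℤ) - m).natAbs ^ 2) [SMOD Ideal.span {X ^ (n + 1)}] := by
  set j := ((n : ℤ) - m).natAbs
  have hbinom := qFact_mul_qBinom_sModEq_one (X_pow_pow_succ_ne_one (R := R) two_pos)
    (a := n) (c := n - j) (n := 2 * n) (k := m) (by omega) (by omega) (by omega)
  rw [SModEq.sub_mem, Ideal.mem_span_singleton] at hbinom ⊢
  have hexp : n + 1 ≤ 2 * (n - j + 1) + j ^ 2 := by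
    have : j ≤ n := by omega
    zify [this]
    nlinarith
  calc X ^ (n + 1) ∣ (X : R⟦X⟧) ^ (2 * (n - j + 1) + j ^ 2) := pow_dvd_pow X hexp
    _ = (X ^ 2) ^ (n - j + 1) * X ^ (j ^ 2) := by rw [pow_add, pow_mul]
    _ ∣ (qFact (X ^ 2) n * qBinom (X ^ 2) (2 * n) m - 1) * X ^ (j ^ 2) :=
      mul_dvd_mul_right hbinom _
    _ = _ := by ring

lemma qFact_mul_sq_prod_sModEq_thetaSeries (n : ℕ) :
    qFact (X ^ 2 : R⟦X⟧) n * (∏ j ∈ range n, (1 + X ^ (2 * j + 1))) ^ 2 ≡ thetaSeries R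
      [SMOD Ideal.span {X ^ (n + 1)}] := by
  rw [sq_prod_one_add_X_pow, mul_sum, thetaSeries]
  calc _ ≡ ∑ m ∈ range (2 * n + 1), (X : R⟦X⟧) ^ (((n : ℤ) - m).natAbs ^ 2)
        [SMOD Ideal.span {X ^ (n + 1)}] := by
        refine SModEq.sum fun m hm => qFact_mul_qBinom_mul_X_pow_sModEq ?_
        rw [mem_range] at hm
        omega
    _ = 2 * ∑ s ∈ range (n + 1), X ^ (s ^ 2) - 1 := sum_X_pow_natAbs_sq n
    _ ≡ 2 * squareSeries R - 1 [SMOD Ideal.span {X ^ (n + 1)}] := by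
        have hsq := sum_X_pow_sq_sModEq_squareSeries (R := R) n
        exact (SModEq.rfl.mul hsq).sub SModEq.rfl

lemma thetaSeries_product_formula :
    thetaSeries R * qPochInf R 1 ^ 2 * qPochInf R 4 ^ 2 = qPochInf R 2 ^ 5 := by
  refine eq_of_forall_sModEq fun n => ?_
  set H := ∏ j ∈ range n, (1 + (X : R⟦X⟧) ^ (2 * j + 1))
  have hfin :
      H * qFact X (2 * n) * qFact (X ^ 4) n = qFact (X ^ 2) n * qFact (X ^ 2) (2 * n) := by
    have hodd : H * ∏ k ∈ range n, (1 - X ^ (2 * k + 1)) =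
        ∏ k ∈ range n, (1 - ((X : R⟦X⟧) ^ 2) ^ (2 * k + 1)) := by
      rw [← prod_mul_distrib]
      exact prod_congr rfl fun k _ => by ring
    rw [qFact_two_mul, qFact_two_mul (X ^ 2), ← mul_assoc, hodd, ← pow_mul]
    ring
  have hθ := (qFact_mul_sq_prod_sModEq_thetaSeries (R := R) n).symm
  have h₁ := qPochInf_sModEq_qFact (R := R) one_pos (show n ≤ 2 * n by omega)
  have h₂ := qPochInf_sModEq_qFact (R := R) two_pos (le_refl n)
  have h₂' := qPochInf_sModEq_qFact (R := R) two_pos (show n ≤ 2 * n by omega)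
  have h₄ := qPochInf_sModEq_qFact (R := R) four_pos (le_refl n)
  rw [pow_one] at h₁
  calc thetaSeries R * qPochInf R 1 ^ 2 * qPochInf R 4 ^ 2
      ≡ qFact (X ^ 2) n * H ^ 2 * qFact X (2 * n) ^ 2 * qFact (X ^ 4) n ^ 2
        [SMOD Ideal.span {X ^ (n + 1)}] := (hθ.mul (h₁.pow 2)).mul (h₄.pow 2)
    _ = qFact (X ^ 2) n * (qFact (X ^ 2) n * qFact (X ^ 2) (2 * n)) ^ 2 := by rw [← hfin]; ring
    _ ≡ qPochInf R 2 * (qPochInf R 2 * qPochInf R 2) ^ 2 [SMOD Ideal.span {X ^ (n + 1)}] :=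
        (h₂.symm.mul ((h₂.symm.mul h₂'.symm).pow 2))
    _ = qPochInf R 2 ^ 5 := by ring

end ProductFormula

lemma coeff_thetaSeries_of_not_isSquare {R : Type*} [CommRing R] {e : ℕ} (he : ¬IsSquare e) :
    coeff e (thetaSeries R) = 0 := by
  have he0 : e ≠ 0 := by rintro rfl; exact he ⟨0, rfl⟩
  rw [thetaSeries, squareSeries, ← map_ofNat C, map_sub, coeff_C_mul, coeff_mk, if_neg he,
    coeff_one, if_neg he0]
  simp

lemma not_isSquare_of_mod_eight {e : ℕ} (he : e % 8 = 3 ∨ e % 8 = 5 ∨ e % 8 = 7) :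
    ¬IsSquare e := by
  rintro ⟨r, rfl⟩
  have hr : r % 8 < 8 := Nat.mod_lt _ (by norm_num)
  have hmod := Nat.mul_mod r r 8
  interval_cases r % 8 <;> omega

lemma IsGenOvercubic.mul_qPochInf_two_pow {abar : ℕ → ℕ → ℕ} (habar : IsGenOvercubic abar)
    {c : ℕ} (hc : 1 ≤ c) :
    (mk fun n => (abar c n : ℤ)) * qPochInf ℤ 2 ^ (2 * c + 2) =
      thetaSeries ℤ * qPochInf ℤ 4 ^ (c + 1) := by
  have hF := habar c hc
  have hθ := thetaSeries_product_formula (R := ℤ)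
  have hu : IsUnit (qPochInf ℤ 1 ^ 2 * qPochInf ℤ 4 ^ 2) :=
    ((isUnit_qPochInf one_pos).pow 2).mul ((isUnit_qPochInf four_pos).pow 2)
  refine hu.mul_left_cancel ?_
  obtain ⟨d, rfl⟩ : ∃ d, c = d + 1 := ⟨c - 1, by omega⟩
  rw [Nat.add_sub_cancel] at hF
  linear_combination (qPochInf ℤ 4 ^ 2 * qPochInf ℤ 2 ^ 2) * hF - qPochInf ℤ 4 ^ (d + 2) * hθ

/-- For all `m, n ≥ 0` and each `w ∈ {3, 5, 7}`,
`a̅_{8m+3}(8n + w) ≡ 0 (mod 16)`. -/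
theorem overcubic_eight_vanish_odd_residues (abar : ℕ → ℕ → ℕ)
    (habar : IsGenOvercubic abar) (m n w : ℕ) (hw : w ∈ ({3, 5, 7} : Finset ℕ)) :
    abar (8 * m + 3) (8 * n + w) ≡ 0 [MOD 16] := by
  have hres : (8 * n + w) % 8 = 3 ∨ (8 * n + w) % 8 = 5 ∨ (8 * n + w) % 8 = 7 := by
    simp only [mem_insert, mem_singleton] at hw
    omega
  have hodd : Odd (8 * n + w) := Nat.odd_iff.mpr (by omega)
  have hgen := habar.mul_qPochInf_two_pow (c := 8 * m + 3) (by omega)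
  rw [show 2 * (8 * m + 3) + 2 = 8 * (2 * m + 1) by ring,
    show 8 * m + 3 + 1 = 4 * (2 * m + 1) by ring, pow_mul, pow_mul] at hgen
  have h16 := sixteen_dvd_coeff_sub_of_mul_pow_eq
    (pow_mem (qPochInf_mem_evenSeries 1) 8) (pow_mem (qPochInf_mem_evenSeries 2) 4)
    ((isUnit_qPochInf two_pos).pow 8) (eight_dvd_qPochInf_pow_sub two_pos)
    ⟨squareSeries ℤ - 1, by rw [thetaSeries]; ring⟩ hgen hodd
  rw [coeff_thetaSeries_of_not_isSquare (not_isSquare_of_mod_eight hres), sub_zero,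
    coeff_mk] at h16
  exact Nat.modEq_zero_iff_dvd.mpr (by exact_mod_cast h16)
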